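/- For every n ≥ 4 and every even divisor k of 2n, there exists a plane tree T with n edges such that λ(T) = k; moreover there exists a plane tree T with n edges such that λ(T) = n. -/
import Mathlib


/-- Rooted (ordered) plane trees: a root with a list of child subtrees. -/
inductive RTree where
  | node : List RTree → RTree

namespace RTree

mutual
/-- Number of edges of a rooted tree. -/
def edges : RTree → ℕ
  | .node cs => edgesF cs
/-- Number of edges of a forest, counting also the edges to the roots. -/
def edgesF : List RTree → ℕ
  | [] => 0
  | c :: cs => edges c + 1 + edgesF cs
end

/-- Tree rotation `ρ(1 u 0 v) = u 1 v 0`: the leftmost child of the root becomes the new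
root, and the old root (with its remaining children) is appended as its last child. -/
def rho : RTree → RTree
  | .node [] => .node []
  | .node (.node cs :: rest) => .node (cs ++ [.node rest])

mutual
/-- The list of vertices of a rooted tree, encoded as addresses (paths of child indices). -/
def addrs : RTree → List (List ℕ)
  | .node cs => [] :: addrsF 0 cs
def addrsF : ℕ → List RTree → List (List ℕ)
  | _, [] => []
  | i, c :: cs => (addrs c).map (i :: ·) ++ addrsF (i + 1) cs
end

/-- Length of the longest common prefix of two addresses. -/
def lcp : List ℕ → List ℕ → ℕ
  | a :: p, b :: q => if a = b then 1 + lcp p q else 0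
  | _, _ => 0

/-- Graph distance between two vertices, given by their addresses. -/
def adist (p q : List ℕ) : ℕ := p.length + q.length - 2 * lcp p q

/-- The potential of the vertex `p`: the sum of distances to all vertices of `t`. -/
def potential (t : RTree) (p : List ℕ) : ℕ := ((addrs t).map (adist p)).sum

/-- The potential `φ(t)` of the tree: the minimum vertex potential. -/
noncomputable def phiMin (t : RTree) : ℕ := sInf {m | ∃ p ∈ addrs t, potential t p = m}

/-- A centroid: a vertex of minimum potential. -/
def IsCentroid (t : RTree) (p : List ℕ) : Prop :=
  p ∈ addrs t ∧ potential t p = phiMin t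

/-- `λ(t)`: the rotation period of the rooted tree `t`, i.e. the number of distinct rooted
trees obtained from `t` by repeated rotation. -/
noncomputable def lam (t : RTree) : ℕ := sInf {i | 0 < i ∧ rho^[i] t = t}

end RTree

namespace RTree

/-- iterated wrapping -/
def wrp : ℕ → RTree → RTree
  | 0, X => X
  | n+1, X => .node [wrp n X]

def pth (n : ℕ) : RTree := wrp n (.node [])

theorem wrp_wrp (a b : ℕ) (X : RTree) : wrp a (wrp b X) = wrp (a + b) X := by
  induction a with
  | zero => rw [Nat.zero_add]; rfl
  | succ a ih =>
    rw [show a+1+b = (a+b)+1 by omega]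
    show RTree.node [wrp a (wrp b X)] = RTree.node [wrp (a+b) X]
    rw [ih]

theorem rho_node (cs rest : List RTree) :
    rho (.node (.node cs :: rest)) = .node (cs ++ [.node rest]) := rfl

theorem edges_node (cs : List RTree) : edges (.node cs) = edgesF cs := rfl
theorem edgesF_nil : edgesF [] = 0 := rfl
theorem edgesF_cons (c : RTree) (cs : List RTree) :
    edgesF (c :: cs) = edges c + 1 + edgesF cs := rfl

theorem edges_wrp (a : ℕ) (X : RTree) : edges (wrp a X) = a + edges X := by
  induction a with
  | zero => show edges X = 0 + edges X; omega
  | succ a ih =>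
    show edges (.node [wrp a X]) = a + 1 + edges X
    rw [edges_node, edgesF_cons, edgesF_nil, ih]; omega

theorem edges_pth (n : ℕ) : edges (pth n) = n := by
  show edges (wrp n (.node [])) = n
  rw [edges_wrp]; rfl

theorem edgesF_rep (r : ℕ) (t : RTree) :
    edgesF (List.replicate r t) = r * (edges t + 1) := by
  induction r with
  | zero => simp [edgesF_nil]
  | succ r ih =>
    rw [List.replicate_succ, edgesF_cons, ih]; ring

theorem L1 (j : ℕ) (Y : RTree) : ∀ Z, rho^[j] (.node [wrp j Y, Z]) = .node [Y, wrp j Z] := by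
  induction j with
  | zero => intro Z; rfl
  | succ j ih =>
    intro Z
    rw [Function.iterate_succ_apply]
    have h : rho (.node [wrp (j+1) Y, Z]) = .node [wrp j Y, wrp 1 Z] := by
      show rho (.node (.node [wrp j Y] :: [Z])) = _
      rw [rho_node]; rfl
    rw [h, ih (wrp 1 Z), wrp_wrp]

theorem formA (u v : ℕ) (L : List RTree) :
    rho^[u+1] (.node (pth (u+v+1) :: L)) = .node [pth v, wrp u (.node L)] := by
  rw [Function.iterate_succ_apply]
  have h : rho (.node (pth (u+v+1) :: L)) = .node [wrp u (pth v), .node L] := by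
    show rho (.node (.node [pth (u+v)] :: L)) = _
    rw [rho_node]
    show RTree.node [pth (u+v), .node L] = _
    unfold pth
    rw [wrp_wrp]
  rw [h, L1]

theorem formMid (u : ℕ) (L : List RTree) :
    rho^[u+1] (.node (pth u :: L)) = wrp (u+1) (.node L) := by
  cases u with
  | zero =>
    show rho (.node (.node [] :: L)) = _
    rw [rho_node]; rfl
  | succ u =>
    rw [show u+1+1 = 1 + (u+1) by omega, Function.iterate_add_apply]
    have h := formA u 0 L
    rw [show u+0+1 = u+1 by omega] at h
    rw [h, show (1:ℕ)+(u+1) = u+1+1 by omega]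
    show rho (.node (.node [] :: [wrp u (.node L)])) = _
    rw [rho_node]; rfl

theorem formB (u v : ℕ) (L : List RTree) :
    rho^[(u+v+2)+(v+1)] (.node (pth (u+v+1) :: L)) = .node [wrp u (.node L), pth v] := by
  rw [show (u+v+2)+(v+1) = (v+1) + ((u+v+1)+1) by omega, Function.iterate_add_apply,
    formMid (u+v+1) L]
  rw [Function.iterate_succ_apply]
  have h : rho (wrp (u+v+1+1) (.node L)) = .node [wrp v (wrp u (.node L)), pth 0] := by
    show rho (.node (.node [wrp (u+v) (.node L)] :: [])) = _
    rw [rho_node, wrp_wrp, Nat.add_comm v u]; rfl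
  rw [h, L1]
  rfl

theorem formEnd (u : ℕ) (L : List RTree) :
    rho^[2*(u+1)] (.node (pth u :: L)) = .node (L ++ [pth u]) := by
  cases u with
  | zero =>
    show rho (rho (.node (.node [] :: L))) = _
    rw [rho_node]
    show rho (.node (.node L :: [])) = _
    rw [rho_node]; rfl
  | succ u =>
    have h := formB 0 u L
    rw [show (0+u+2)+(u+1) = (u+2)+(u+1) by omega, show 0+u+1 = u+1 by omega] at h
    rw [show 2*(u+1+1) = 1 + ((u+2)+(u+1)) by omega, Function.iterate_add_apply, h]
    show rho (.node (.node L :: [pth u])) = _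
    rw [rho_node]; rfl

theorem lam_eq_of (t : RTree) (k : ℕ) (hk : 0 < k) (hper : rho^[k] t = t)
    (hmin : ∀ d, d ∣ k → 0 < d → d < k → rho^[d] t ≠ t) : lam t = k := by
  have hkS : k ∈ {i | 0 < i ∧ rho^[i] t = t} := ⟨hk, hper⟩
  set m := sInf {i | 0 < i ∧ rho^[i] t = t} with hmdef
  obtain ⟨hm0, hmp⟩ : 0 < m ∧ rho^[m] t = t := Nat.sInf_mem ⟨k, hkS⟩
  have hmk : m ≤ k := Nat.sInf_le hkS
  have hmul : ∀ q, rho^[q * m] t = t := by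
    intro q; induction q with
    | zero => simp
    | succ q ih => rw [Nat.succ_mul, Function.iterate_add_apply, hmp, ih]
  have hmod : rho^[k % m] t = t := by
    have h1 : rho^[k] t = rho^[k % m] t := by
      conv_lhs => rw [← Nat.mod_add_div k m]
      rw [Function.iterate_add_apply, Nat.mul_comm, hmul]
    rw [← h1, hper]
  have hdvd : m ∣ k := by
    by_contra hcon
    have h0 : k % m ≠ 0 := fun hh => hcon (Nat.dvd_of_mod_eq_zero hh)
    have hmem2 : k % m ∈ {i | 0 < i ∧ rho^[i] t = t} := ⟨Nat.pos_of_ne_zero h0, hmod⟩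
    have hle := Nat.sInf_le hmem2
    have hlt : k % m < m := Nat.mod_lt _ hm0
    omega
  rcases eq_or_lt_of_le hmk with h | h
  · exact h
  · exact absurd hmp (hmin m hdvd hm0 h)

theorem half_of_dvd {d m : ℕ} (h : d ∣ 2*m) (h0 : 0 < d) (h2 : d < 2*m) : d ≤ m := by
  obtain ⟨c, hc⟩ := h
  rcases Nat.lt_or_ge c 2 with hc2 | hc2
  · interval_cases c <;> omega
  · have := Nat.mul_le_mul (le_refl d) hc2
    omega


theorem lam_path (n : ℕ) (hn : 2 ≤ n) : lam (pth n) = n := by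
  obtain ⟨c, rfl⟩ : ∃ c, n = c + 2 := ⟨n - 2, by omega⟩
  apply lam_eq_of _ _ (by omega)
  · -- periodicity
    rw [show c+2 = (c+1)+1 by omega, Function.iterate_succ_apply']
    have h := formA c 0 ([] : List RTree)
    rw [show c+0+1 = c+1 by omega] at h
    have h2 : pth (c+1+1) = .node (pth (c+1) :: []) := rfl
    rw [h2, h]
    show rho (.node (.node [] :: [wrp c (.node [])])) = _
    rw [rho_node]
    rfl
  · intro d _ hd0 hdlt
    obtain ⟨u, rfl⟩ : ∃ u, d = u + 1 := ⟨d - 1, by omega⟩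
    obtain ⟨v, hv⟩ : ∃ v, c = u + v := ⟨c - u, by omega⟩
    subst hv
    have h := formA u v ([] : List RTree)
    have h2 : pth (u+v+2) = .node (pth (u+v+1) :: []) := rfl
    rw [h2, h]
    intro hcon
    rw [RTree.node.injEq] at hcon
    simp at hcon

theorem lam_star (u r : ℕ) (hr : 2 ≤ r) :
    lam (.node (List.replicate r (pth u))) = 2*(u+1) := by
  obtain ⟨s, rfl⟩ : ∃ s, r = s + 2 := ⟨r - 2, by omega⟩
  apply lam_eq_of _ _ (by omega)
  · have h2 : List.replicate (s+2) (pth u) = pth u :: List.replicate (s+1) (pth u) := rfl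
    rw [h2, formEnd u (List.replicate (s+1) (pth u)), ← List.replicate_succ']
    rfl
  · intro d hdvd hd0 hdlt
    have hle : d ≤ u + 1 := half_of_dvd hdvd hd0 hdlt
    have h2 : List.replicate (s+2) (pth u) = pth u :: List.replicate (s+1) (pth u) := rfl
    rcases eq_or_lt_of_le hle with h | h
    · subst h
      rw [h2, formMid u (List.replicate (s+1) (pth u))]
      show RTree.node [wrp u (.node (List.replicate (s+1) (pth u)))] ≠ _
      intro hcon
      rw [RTree.node.injEq] at hcon
      have := congrArg List.length hcon
      simp at this
    · obtain ⟨e, rfl⟩ : ∃ e, d = e + 1 := ⟨d - 1, by omega⟩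
      obtain ⟨v, hv⟩ : ∃ v, u = e + v + 1 := ⟨u - e - 1, by omega⟩
      have h3 := formA e v (List.replicate (s+1) (pth u))
      rw [← hv] at h3
      rw [h2, h3]
      intro hcon
      rw [RTree.node.injEq, List.cons.injEq] at hcon
      have h4 := congrArg edges hcon.1
      rw [edges_pth, edges_pth] at h4
      omega

theorem lam_broom (c : ℕ) :
    lam (.node [pth (c+1), .node [], .node []]) = 2*(c+4) := by
  apply lam_eq_of _ _ (by omega)
  · -- periodicity: 2(c+4) = 2 + (2 + 2(c+2))
    rw [show 2*(c+4) = 2*(0+1) + (2*(0+1) + 2*(c+1+1)) by omega,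
      Function.iterate_add_apply, Function.iterate_add_apply]
    have h1 := formEnd (c+1) [RTree.node [], RTree.node []]
    have e1 : RTree.node [pth (c+1), .node [], .node []]
        = .node (pth (c+1) :: [RTree.node [], RTree.node []]) := rfl
    rw [e1, h1]
    have e2 : RTree.node ([RTree.node [], RTree.node []] ++ [pth (c+1)])
        = .node (pth 0 :: [RTree.node [], pth (c+1)]) := rfl
    rw [e2, formEnd 0 [RTree.node [], pth (c+1)]]
    have e3 : RTree.node ([RTree.node [], pth (c+1)] ++ [pth 0])
        = .node (pth 0 :: [pth (c+1), .node []]) := rfl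
    rw [e3, formEnd 0 [pth (c+1), RTree.node []]]
    rfl
  · intro d hdvd hd0 hdlt
    have hle : d ≤ c + 4 := half_of_dvd hdvd hd0 hdlt
    have e1 : RTree.node [pth (c+1), .node [], .node []]
        = .node (pth (c+1) :: [RTree.node [], RTree.node []]) := rfl
    rcases Nat.lt_or_ge d (c+2) with hcase | hcase
    · -- 1 ≤ d ≤ c+1 : formA
      obtain ⟨e, rfl⟩ : ∃ e, d = e + 1 := ⟨d - 1, by omega⟩
      obtain ⟨v, hv⟩ : ∃ v, c + 1 = e + v + 1 := ⟨c - e, by omega⟩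
      have h3 := formA e v [RTree.node [], RTree.node []]
      rw [← hv] at h3
      rw [e1, h3]
      intro hcon
      rw [RTree.node.injEq] at hcon
      simp at hcon
    · rcases Nat.eq_or_lt_of_le hcase with hcase2 | hcase2
      · -- d = c+2 : formMid
        subst hcase2
        rw [e1, formMid (c+1) [RTree.node [], RTree.node []]]
        show RTree.node [wrp (c+1) (.node [RTree.node [], RTree.node []])] ≠ _
        intro hcon
        rw [RTree.node.injEq] at hcon
        simp at hcon
      · rcases Nat.eq_or_lt_of_le hcase2 with hcase3 | hcase3
        · -- d = c+3 : formB u:=c v:=0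
          have hd3 : d = c + 3 := by omega
          subst hd3
          have h3 := formB c 0 [RTree.node [], RTree.node []]
          rw [show (c+0+2)+(0+1) = c+3 by omega, show c+0+1 = c+1 by omega] at h3
          rw [e1, h3]
          intro hcon
          rw [RTree.node.injEq] at hcon
          simp at hcon
        · -- d = c+4
          have hd4 : d = c + 4 := by omega
          subst hd4
          cases c with
          | zero =>
            have h4 := formEnd 1 [RTree.node [], RTree.node []]
            rw [show 2*(1+1) = 0+4 by omega] at h4
            rw [e1, h4]
            intro hcon
            rw [RTree.node.injEq] at hcon
            simp [pth, wrp] at hcon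
          | succ c =>
            have h3 := formB c 1 [RTree.node [], RTree.node []]
            rw [show (c+1+2)+(1+1) = c+1+4 by omega, show c+1+1 = c+1+1 by omega] at h3
            rw [e1, h3]
            intro hcon
            rw [RTree.node.injEq] at hcon
            simp at hcon

end RTree

open RTree in
/-- For every `n ≥ 4` and every even divisor `k` of `2n` there is a plane
tree with `n` edges and `λ(T) = k`; moreover there is a plane tree with `n` edges and
`λ(T) = n`. -/
theorem lam_realizable (n : ℕ) (hn : 4 ≤ n) :
    (∀ k : ℕ, Even k → k ∣ 2 * n → ∃ t : RTree, t.edges = n ∧ lam t = k) ∧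
    (∃ t : RTree, t.edges = n ∧ lam t = n) := by
  constructor
  · intro k hkeven hkdvd
    obtain ⟨m, rfl⟩ : ∃ m, k = 2*m := by
      obtain ⟨m, hm⟩ := hkeven; exact ⟨m, by omega⟩
    have hmdvd : m ∣ n := (Nat.mul_dvd_mul_iff_left (by norm_num : (0:ℕ) < 2)).mp hkdvd
    have hm0 : 0 < m := by
      rcases Nat.eq_zero_or_pos m with h | h
      · subst h
        rw [Nat.mul_zero] at hkdvd
        have := Nat.eq_zero_of_zero_dvd hkdvd
        omega
      · exact h
    have hmn : m ≤ n := Nat.le_of_dvd (by omega) hmdvd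
    rcases eq_or_lt_of_le hmn with heq | hlt
    · subst heq
      refine ⟨.node [pth (m-4+1), .node [], .node []], ?_, ?_⟩
      · simp [edges_node, edgesF_cons, edgesF_nil, edges_pth]
        omega
      · rw [lam_broom (m-4)]
        omega
    · obtain ⟨r, hr⟩ := hmdvd
      have hr2 : 2 ≤ r := by
        rcases r with _ | _ | r
        · omega
        · rw [Nat.mul_one] at hr; omega
        · omega
      obtain ⟨u, rfl⟩ : ∃ u, m = u+1 := ⟨m-1, by omega⟩
      refine ⟨.node (List.replicate r (pth u)), ?_, ?_⟩
      · rw [edges_node, edgesF_rep, edges_pth, hr]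
        ring
      · rw [lam_star u r hr2]
  · exact ⟨pth n, edges_pth n, lam_path n (by omega)⟩
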